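/- arXiv:2011.09468 — 4 statements merged into one kernel-verified Lean document; each statement's English description precedes it below -/
import Mathlib

section
/- For s > 0 and λ > 0, the value α* = λ·W(λ^{-1}s² + 1)/(s² + λ) satisfies the fixed-point equation -log(α*) = λ^{-1}(s² + λ)·α*, where W is the principal branch of the Lambert W function. -/
theorem stmt_7 (s lam w : ℝ) (hs : 0 < s) (hlam : 0 < lam)
    (hw : 0 ≤ w) (hW : w * Real.exp w = lam⁻¹ * s ^ 2 + 1) :
    -Real.log (lam * w / (s ^ 2 + lam)) =
      lam⁻¹ * (s ^ 2 + lam) * (lam * w / (s ^ 2 + lam)) := by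
  have hsl : 0 < s ^ 2 + lam := by positivity
  have key : lam * w / (s ^ 2 + lam) = Real.exp (-w) := by
    rw [div_eq_iff hsl.ne', Real.exp_neg, eq_comm, inv_mul_eq_div,
      div_eq_iff (Real.exp_pos w).ne']
    field_simp at hW
    nlinarith [hW]
  rw [key, Real.log_exp]
  have hexp := Real.exp_pos w
  have : Real.exp (-w) * Real.exp w = 1 := by
    rw [← Real.exp_add]; simp
  have hW' : w * Real.exp w * lam = s ^ 2 + lam := by
    field_simp at hW; linarith
  field_simp
  linear_combination Real.exp (-w) * hW' - w * lam * this
end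

section
/- The function g(s) = s²·W(λ^{-1}s² + 1)/(s² + λ) is strictly increasing in s for s > 0, for any fixed λ > 0, where W is the principal Lambert W function. -/
theorem stmt_9 (lam : ℝ) (hlam : 0 < lam) (W : ℝ → ℝ)
    (hW : ∀ x : ℝ, 0 ≤ x → 0 ≤ W x ∧ W x * Real.exp (W x) = x) :
    StrictMonoOn (fun s : ℝ => s ^ 2 * W (lam⁻¹ * s ^ 2 + 1) / (s ^ 2 + lam))
      (Set.Ioi (0:ℝ)) := by
  -- W is strictly monotone on nonnegatives
  have hWmono : ∀ x y : ℝ, 0 ≤ x → 0 ≤ y → x < y → W x < W y := by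
    intro x y hx hy hxy
    by_contra h
    push_neg at h
    have hx' := hW x hx
    have hy' := hW y hy
    have : W y * Real.exp (W y) ≤ W x * Real.exp (W x) :=
      mul_le_mul h (Real.exp_le_exp.mpr h) (Real.exp_pos _).le hx'.1
    rw [hx'.2, hy'.2] at this
    linarith
  have hWpos : ∀ x : ℝ, 0 < x → 0 < W x := by
    intro x hx
    obtain ⟨h1, h2⟩ := hW x hx.le
    rcases h1.lt_or_eq with h | h
    · exact h
    · exfalso; rw [← h] at h2; simp at h2; linarith
  intro a ha b hb hab
  simp only [Set.mem_Ioi] at ha hb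
  have ha2 : (0:ℝ) < a ^ 2 := by positivity
  have hb2 : (0:ℝ) < b ^ 2 := by positivity
  have hda : (0:ℝ) < a ^ 2 + lam := by linarith
  have hdb : (0:ℝ) < b ^ 2 + lam := by linarith
  have hxa : (0:ℝ) < lam⁻¹ * a ^ 2 + 1 := by positivity
  have hxb : (0:ℝ) < lam⁻¹ * b ^ 2 + 1 := by positivity
  have hab2 : a ^ 2 < b ^ 2 := by nlinarith
  have hWlt : W (lam⁻¹ * a ^ 2 + 1) < W (lam⁻¹ * b ^ 2 + 1) := by
    apply hWmono _ _ hxa.le hxb.le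
    have : (0:ℝ) < lam⁻¹ := by positivity
    nlinarith
  have hWa : 0 < W (lam⁻¹ * a ^ 2 + 1) := hWpos _ hxa
  have hfrac : a ^ 2 / (a ^ 2 + lam) < b ^ 2 / (b ^ 2 + lam) := by
    rw [div_lt_div_iff₀ hda hdb]
    nlinarith
  have key : a ^ 2 / (a ^ 2 + lam) * W (lam⁻¹ * a ^ 2 + 1)
      < b ^ 2 / (b ^ 2 + lam) * W (lam⁻¹ * b ^ 2 + 1) :=
    mul_lt_mul hfrac hWlt.le hWa (by positivity)
  simpa [div_mul_eq_mul_div, mul_comm] using key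
end

section
/- Let λ > 0, δ > 0, s₁ > s₂ > 0, and define F(s₁², s₂²) = δ·λ·s₂²·(e^{W((λ+s₁²)/λ)} - e^{W((λ+s₂²)/λ)})·(W((λ+s₁²)/λ) + 1) / [(λ + λ·e^{W((λ+s₁²)/λ)} + s₁²)²·(λ + λ·e^{W((λ+s₂²)/λ)} + s₂²)]. Then F(s₁², s₂²) > 0. -/
theorem stmt_11 (lam δ s₁ s₂ w₁ w₂ : ℝ) (hlam : 0 < lam) (hδ : 0 < δ)
    (hs₂ : 0 < s₂) (hs : s₂ < s₁)
    (hw₁ : 0 ≤ w₁) (hW₁ : w₁ * Real.exp w₁ = (lam + s₁ ^ 2) / lam)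
    (hw₂ : 0 ≤ w₂) (hW₂ : w₂ * Real.exp w₂ = (lam + s₂ ^ 2) / lam) :
    0 < δ * lam * s₂ ^ 2 * (Real.exp w₁ - Real.exp w₂) * (w₁ + 1) /
        ((lam + lam * Real.exp w₁ + s₁ ^ 2) ^ 2 *
          (lam + lam * Real.exp w₂ + s₂ ^ 2)) := by
  have hs₁ : 0 < s₁ := hs₂.trans hs
  have hsq : s₂ ^ 2 < s₁ ^ 2 := by nlinarith
  have hval : w₂ * Real.exp w₂ < w₁ * Real.exp w₁ := by
    rw [hW₁, hW₂]
    gcongr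
  have hw : w₂ < w₁ := by
    by_contra h
    push_neg at h
    have := mul_le_mul h (Real.exp_le_exp.2 h) (Real.exp_pos w₁).le hw₂
    linarith
  have hexp : Real.exp w₂ < Real.exp w₁ := Real.exp_lt_exp.2 hw
  have e1 := Real.exp_pos w₁
  have e2 := Real.exp_pos w₂
  have hnum : 0 < Real.exp w₁ - Real.exp w₂ := sub_pos.2 hexp
  apply div_pos
  · have : (0:ℝ) < w₁ + 1 := by linarith
    positivity
  · positivity
end

section
/- Let f : ℝ^m → ℝ^n be linear, f(θ) = Φθ, and let L(θ) = Σᵢ log(1 + exp(-yᵢ(Φθ)ᵢ)) + (λ/2)‖θ‖² with λ > 0 and yᵢ ∈ {-1,+1}. Then min_θ L(θ) = max_{α ∈ (0,1)^n} [Σᵢ H(αᵢ) - (1/(2λ))·αᵀ Y Φ Φᵀ Yᵀ α], where H is binary entropy and Y = diag(y). -/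
/-!
Put `t = M θ` and `w = Mᵀ α` with `M = Y Φ`. The duality gap `L θ - G α` splits into the
Fenchel–Young gaps `log (1 + exp (-tᵢ)) - H αᵢ + αᵢ tᵢ`, nonnegative because the convex conjugate
of the logistic loss is the negative binary entropy, plus the completed square
`‖λ θ - w‖² / (2 λ)`. The primal objective is continuous and coercive, so it has a minimizer `θ₀`,
and its first-order condition `λ θ₀ = Mᵀ α₀` with `α₀ᵢ = σ(-tᵢ) ∈ (0, 1)` makes both gaps vanish:
`L θ₀ = G α₀`, and weak duality shows that `α₀` maximizes `G`.
-/

open Matrix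

open Real Finset

noncomputable def logisticLoss (u : ℝ) : ℝ := log (1 + exp (-u))

@[fun_prop]
lemma continuous_logisticLoss : Continuous logisticLoss :=
  (continuous_const.add (continuous_exp.comp continuous_neg)).log fun u =>
    (by positivity : 0 < 1 + exp (-u)).ne'

lemma hasDerivAt_logisticLoss (u : ℝ) : HasDerivAt logisticLoss (-sigmoid (-u)) u := by
  refine ((((hasDerivAt_neg u).exp).const_add 1).log (by positivity)).congr_deriv ?_
  rw [← sigmoid_mul_rexp_neg, sigmoid_def]
  field_simp

lemma binEntropy_sub_mul_le_logisticLoss {a : ℝ} (ha : a ∈ Set.Ioo 0 1) (u : ℝ) :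
    binEntropy a - a * u ≤ logisticLoss u := by
  obtain ⟨ha₀, ha₁⟩ := ha
  have h1a : 0 < 1 - a := by linarith
  -- Jensen for `log` at the points `(1 - a)⁻¹` and `exp (-u) / a`, with weights `1 - a` and `a`
  have jensen := strictConcaveOn_log_Ioi.concaveOn.2 (Set.mem_Ioi.2 (inv_pos.2 h1a))
    (Set.mem_Ioi.2 (div_pos (exp_pos (-u)) ha₀)) h1a.le ha₀.le (by ring)
  have hmix : (1 - a) • (1 - a)⁻¹ + a • (exp (-u) / a) = 1 + exp (-u) := by
    simp only [smul_eq_mul]; field_simp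
  rw [hmix, smul_eq_mul, smul_eq_mul, log_div (exp_ne_zero _) ha₀.ne', log_exp] at jensen
  rw [binEntropy, logisticLoss, log_inv a]
  linarith

lemma binEntropy_sigmoid_neg_sub_mul (u : ℝ) :
    binEntropy (sigmoid (-u)) - sigmoid (-u) * u = logisticLoss u := by
  have hcompl : 1 - sigmoid (-u) = sigmoid u := by rw [sigmoid_neg]; ring
  have hlog_neg : log (sigmoid (-u))⁻¹ = u + logisticLoss u := by
    rw [sigmoid_def, inv_inv, neg_neg, logisticLoss, ← log_exp u,
      ← log_mul (exp_ne_zero u) (by positivity), mul_add, ← exp_add, log_exp]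
    simp [add_comm]
  have hlog : log (sigmoid u)⁻¹ = logisticLoss u := by rw [sigmoid_def, inv_inv, logisticLoss]
  rw [binEntropy, hcompl, hlog_neg, hlog, ← hcompl]
  ring

lemma dotProduct_mul_transpose_mulVec {ι κ R : Type*} [Fintype ι] [Fintype κ] [CommSemiring R]
    (A : Matrix ι κ R) (v : ι → R) : v ⬝ᵥ ((A * Aᵀ) *ᵥ v) = (Aᵀ *ᵥ v) ⬝ᵥ (Aᵀ *ᵥ v) := by
  rw [← mulVec_mulVec, dotProduct_mulVec, ← mulVec_transpose]

lemma norm_sq_le_sum_sq {κ : Type*} [Fintype κ] (θ : κ → ℝ) : ‖θ‖ ^ 2 ≤ ∑ j, θ j ^ 2 := by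
  have hle : ‖θ‖ ≤ √(∑ j, θ j ^ 2) := (pi_norm_le_iff_of_nonneg (sqrt_nonneg _)).2 fun j =>
    (norm_eq_abs (θ j)).trans_le <| abs_le_sqrt <|
      single_le_sum (f := fun j => θ j ^ 2) (fun _ _ => sq_nonneg _) (mem_univ j)
  exact (le_sqrt (norm_nonneg θ) (sum_nonneg fun _ _ => sq_nonneg _)).1 hle

section LogisticRidge

variable {ι κ : Type*} [Fintype ι] [Fintype κ] (M : Matrix ι κ ℝ) (lam : ℝ)

noncomputable def logisticRidgeLoss (θ : κ → ℝ) : ℝ :=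
  ∑ i, logisticLoss ((M *ᵥ θ) i) + lam / 2 * ∑ j, θ j ^ 2

noncomputable def logisticRidgeDual (α : ι → ℝ) : ℝ :=
  ∑ i, binEntropy (α i) - 1 / (2 * lam) * (α ⬝ᵥ ((M * Mᵀ) *ᵥ α))

lemma logisticRidgeLoss_sub_dual (hlam : lam ≠ 0) (θ : κ → ℝ) (α : ι → ℝ) :
    logisticRidgeLoss M lam θ - logisticRidgeDual M lam α =
      ∑ i, (logisticLoss ((M *ᵥ θ) i) - (binEntropy (α i) - α i * (M *ᵥ θ) i)) +
        ∑ j, (lam * θ j - (Mᵀ *ᵥ α) j) ^ 2 / (2 * lam) := by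
  have hsq : ∀ j, (lam * θ j - (Mᵀ *ᵥ α) j) ^ 2 / (2 * lam) =
      lam / 2 * θ j ^ 2 + 1 / (2 * lam) * ((Mᵀ *ᵥ α) j * (Mᵀ *ᵥ α) j) - (Mᵀ *ᵥ α) j * θ j := by
    intro j; field_simp; ring
  have hpair : α ⬝ᵥ (M *ᵥ θ) = (Mᵀ *ᵥ α) ⬝ᵥ θ := by
    rw [dotProduct_mulVec, mulVec_transpose]
  simp only [dotProduct] at hpair
  rw [logisticRidgeLoss, logisticRidgeDual, dotProduct_mul_transpose_mulVec, dotProduct]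
  simp only [hsq, sum_sub_distrib, sum_add_distrib, ← mul_sum, hpair]
  ring

lemma logisticRidgeDual_le_loss (hlam : 0 < lam) {α : ι → ℝ} (hα : ∀ i, α i ∈ Set.Ioo 0 1)
    (θ : κ → ℝ) : logisticRidgeDual M lam α ≤ logisticRidgeLoss M lam θ := by
  have hgap := logisticRidgeLoss_sub_dual M lam hlam.ne' θ α
  have hfenchel : 0 ≤ ∑ i, (logisticLoss ((M *ᵥ θ) i) - (binEntropy (α i) - α i * (M *ᵥ θ) i)) :=
    sum_nonneg fun i _ => sub_nonneg.2 (binEntropy_sub_mul_le_logisticLoss (hα i) _)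
  have hridge : 0 ≤ ∑ j, (lam * θ j - (Mᵀ *ᵥ α) j) ^ 2 / (2 * lam) :=
    sum_nonneg fun j _ => by positivity
  linarith

lemma logisticRidgeLoss_eq_dual_sigmoid (hlam : lam ≠ 0) {θ : κ → ℝ}
    (hθ : lam • θ = Mᵀ *ᵥ fun i => sigmoid (-(M *ᵥ θ) i)) :
    logisticRidgeLoss M lam θ = logisticRidgeDual M lam fun i => sigmoid (-(M *ᵥ θ) i) := by
  rw [← sub_eq_zero, logisticRidgeLoss_sub_dual M lam hlam, ← hθ]
  simp [binEntropy_sigmoid_neg_sub_mul]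

lemma hasDerivAt_logisticRidgeLoss_add_smul (θ v : κ → ℝ) :
    HasDerivAt (fun s : ℝ => logisticRidgeLoss M lam (θ + s • v))
      ((lam • θ - Mᵀ *ᵥ fun i => sigmoid (-(M *ᵥ θ) i)) ⬝ᵥ v) 0 := by
  have hline : (fun s : ℝ => logisticRidgeLoss M lam (θ + s • v)) = fun s =>
      ∑ i, logisticLoss ((M *ᵥ θ) i + s * (M *ᵥ v) i) + lam / 2 * ∑ j, (θ j + s * v j) ^ 2 := by
    funext s; simp [logisticRidgeLoss, mulVec_add, mulVec_smul]
  have hloss : ∀ i, HasDerivAt (fun s => logisticLoss ((M *ᵥ θ) i + s * (M *ᵥ v) i))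
      (-sigmoid (-(M *ᵥ θ) i) * (M *ᵥ v) i) 0 := fun i => by
    have hin : HasDerivAt (fun s : ℝ => (M *ᵥ θ) i + s * (M *ᵥ v) i) ((M *ᵥ v) i) 0 := by
      simpa using ((hasDerivAt_id (0 : ℝ)).mul_const ((M *ᵥ v) i)).const_add ((M *ᵥ θ) i)
    exact (hasDerivAt_logisticLoss _).comp_of_eq 0 hin (by simp)
  have hridge : ∀ j, HasDerivAt (fun s => (θ j + s * v j) ^ 2) (2 * θ j * v j) 0 := fun j => by
    have hin : HasDerivAt (fun s : ℝ => θ j + s * v j) (v j) 0 := by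
      simpa using ((hasDerivAt_id (0 : ℝ)).mul_const (v j)).const_add (θ j)
    simpa using hin.fun_pow 2
  rw [hline]
  refine ((HasDerivAt.fun_sum fun i _ => hloss i).add
    ((HasDerivAt.fun_sum fun j _ => hridge j).const_mul (lam / 2))).congr_deriv ?_
  rw [sub_dotProduct, mulVec_transpose, ← dotProduct_mulVec]
  simp only [dotProduct, Pi.smul_apply, smul_eq_mul, neg_mul, sum_neg_distrib]
  rw [add_comm, sub_eq_add_neg]
  congr 1
  rw [mul_sum]
  exact sum_congr rfl fun j _ => by ring

theorem exists_forall_logisticRidgeLoss_le (hlam : 0 < lam) :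
    ∃ θ₀, ∀ θ, logisticRidgeLoss M lam θ₀ ≤ logisticRidgeLoss M lam θ := by
  have hcont : Continuous (logisticRidgeLoss M lam) := by
    unfold logisticRidgeLoss
    fun_prop
  refine hcont.exists_forall_le (Filter.tendsto_atTop_mono (fun θ => ?_)
    (((Filter.tendsto_pow_atTop two_ne_zero).comp tendsto_norm_cocompact_atTop).const_mul_atTop
      (half_pos hlam)))
  have hloss : 0 ≤ ∑ i, logisticLoss ((M *ᵥ θ) i) :=
    sum_nonneg fun i _ => log_nonneg (by simpa using (exp_pos _).le)
  have := mul_le_mul_of_nonneg_left (norm_sq_le_sum_sq θ) (half_pos hlam).le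
  simp only [logisticRidgeLoss, Function.comp_apply]
  linarith

lemma smul_eq_of_forall_logisticRidgeLoss_le {θ₀ : κ → ℝ}
    (hmin : ∀ θ, logisticRidgeLoss M lam θ₀ ≤ logisticRidgeLoss M lam θ) :
    lam • θ₀ = Mᵀ *ᵥ fun i => sigmoid (-(M *ᵥ θ₀) i) := by
  set r := lam • θ₀ - Mᵀ *ᵥ fun i => sigmoid (-(M *ᵥ θ₀) i)
  have hlocal : IsLocalMin (fun s : ℝ => logisticRidgeLoss M lam (θ₀ + s • r)) 0 :=
    Filter.Eventually.of_forall fun s => by simpa using hmin (θ₀ + s • r)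
  have hr : r ⬝ᵥ r = 0 :=
    hlocal.hasDerivAt_eq_zero (hasDerivAt_logisticRidgeLoss_add_smul M lam θ₀ r)
  exact sub_eq_zero.1 (dotProduct_self_eq_zero.1 hr)

end LogisticRidge

theorem logisticRidge_strong_duality {ι κ : Type*} [Fintype ι] [Fintype κ] (M : Matrix ι κ ℝ)
    {lam : ℝ} (hlam : 0 < lam) :
    ∃ θ₀ : κ → ℝ, ∃ α₀ : ι → ℝ,
      IsLeast (Set.range (logisticRidgeLoss M lam)) (logisticRidgeLoss M lam θ₀) ∧
      (∀ i, α₀ i ∈ Set.Ioo 0 1) ∧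
      IsGreatest (logisticRidgeDual M lam '' {α | ∀ i, α i ∈ Set.Ioo 0 1})
        (logisticRidgeDual M lam α₀) ∧
      logisticRidgeLoss M lam θ₀ = logisticRidgeDual M lam α₀ := by
  obtain ⟨θ₀, hmin⟩ := exists_forall_logisticRidgeLoss_le M lam hlam
  set α₀ : ι → ℝ := fun i => sigmoid (-(M *ᵥ θ₀) i)
  have hα₀_mem : ∀ i, α₀ i ∈ Set.Ioo 0 1 := fun i => ⟨sigmoid_pos _, sigmoid_lt_one _⟩
  have hgap : logisticRidgeLoss M lam θ₀ = logisticRidgeDual M lam α₀ :=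
    logisticRidgeLoss_eq_dual_sigmoid M lam hlam.ne'
      (smul_eq_of_forall_logisticRidgeLoss_le M lam hmin)
  refine ⟨θ₀, α₀, ⟨⟨θ₀, rfl⟩, ?_⟩, hα₀_mem, ⟨⟨α₀, hα₀_mem, rfl⟩, ?_⟩, hgap⟩
  · rintro _ ⟨θ, rfl⟩
    exact hmin θ
  · rintro _ ⟨α, hα, rfl⟩
    exact hgap ▸ logisticRidgeDual_le_loss M lam hlam hα θ₀

theorem stmt_15_general {n m : ℕ} (Φ : Matrix (Fin n) (Fin m) ℝ) (y : Fin n → ℝ)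
    (lam : ℝ) (hlam : 0 < lam) :
    let Y := Matrix.diagonal y
    let L : (Fin m → ℝ) → ℝ := fun θ =>
      (∑ i, Real.log (1 + Real.exp (-(y i * (Φ *ᵥ θ) i)))) +
        lam / 2 * ∑ j, θ j ^ 2
    let H : ℝ → ℝ := fun a => -a * Real.log a - (1 - a) * Real.log (1 - a)
    let G : (Fin n → ℝ) → ℝ := fun α =>
      (∑ i, H (α i)) - 1 / (2 * lam) * (α ⬝ᵥ ((Y * Φ * Φᵀ * Yᵀ) *ᵥ α))
    ∃ θ₀ : Fin m → ℝ, ∃ α₀ : Fin n → ℝ,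
      IsLeast (Set.range L) (L θ₀) ∧
      (∀ i, α₀ i ∈ Set.Ioo (0:ℝ) 1) ∧
      IsGreatest (G '' {α | ∀ i, α i ∈ Set.Ioo (0:ℝ) 1}) (G α₀) ∧
      L θ₀ = G α₀ := by
  intro Y L H G
  have hL : L = logisticRidgeLoss (Y * Φ) lam := by
    funext θ
    simp only [L, logisticRidgeLoss, logisticLoss, ← mulVec_mulVec, Y, mulVec_diagonal]
  have hG : G = logisticRidgeDual (Y * Φ) lam := by
    funext α
    have hH : ∀ a, H a = binEntropy a := fun a => by simp only [H, binEntropy, log_inv]; ring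
    simp only [G, logisticRidgeDual, hH, transpose_mul, ← Matrix.mul_assoc]
  rw [hL, hG]
  exact logisticRidge_strong_duality (Y * Φ) hlam

theorem stmt_15 {n m : ℕ} (Φ : Matrix (Fin n) (Fin m) ℝ) (y : Fin n → ℝ)
    (hy : ∀ i, y i = 1 ∨ y i = -1) (lam : ℝ) (hlam : 0 < lam) :
    let Y := Matrix.diagonal y
    let L : (Fin m → ℝ) → ℝ := fun θ =>
      (∑ i, Real.log (1 + Real.exp (-(y i * (Φ *ᵥ θ) i)))) +
        lam / 2 * ∑ j, θ j ^ 2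
    let H : ℝ → ℝ := fun a => -a * Real.log a - (1 - a) * Real.log (1 - a)
    let G : (Fin n → ℝ) → ℝ := fun α =>
      (∑ i, H (α i)) - 1 / (2 * lam) * (α ⬝ᵥ ((Y * Φ * Φᵀ * Yᵀ) *ᵥ α))
    ∃ θ₀ : Fin m → ℝ, ∃ α₀ : Fin n → ℝ,
      IsLeast (Set.range L) (L θ₀) ∧
      (∀ i, α₀ i ∈ Set.Ioo (0:ℝ) 1) ∧
      IsGreatest (G '' {α | ∀ i, α i ∈ Set.Ioo (0:ℝ) 1}) (G α₀) ∧
      L θ₀ = G α₀ :=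
  stmt_15_general Φ y lam hlam
end
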